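/- arXiv:2005.13596 — 4 statements merged into one kernel-verified Lean document; each statement's English description precedes it below -/
import Mathlib

section
/- Rank-transform sufficiency for regression: for any real random variable X with distribution function F_X, and any integrable real random variable W defined on the same probability space, the conditional expectation of W given X coincides almost surely with the conditional expectation of W given F_X(X): E[W | σ(X)] = E[W | σ(F_X ∘ X)] almost surely. -/
open MeasureTheory Set Filter ProbabilityTheory

/-! For each `c`, every `x` in `A = {x > c | F_X x ≤ F_X c}` has `P(X ∈ (c, x]) = F_X x - F_X c = 0`,
and since `ℝ` is second countable this forces `P(X ∈ A) = 0`. Hence `{X ≤ c}` and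
`{F_X(X) ≤ F_X(c)}` agree almost surely, so every `σ(X)`-measurable set agrees almost surely with
a `σ(F_X ∘ X)`-measurable one, and `E[W | σ(F_X ∘ X)]` has the defining set integrals of
`E[W | σ(X)]`. -/

theorem measure_eq_zero_of_forall_measure_Ioc_eq_zero {α : Type*} [LinearOrder α]
    [TopologicalSpace α] [OrderTopology α] [SecondCountableTopology α] [MeasurableSpace α]
    {μ : Measure α} {c : α} {s : Set α} (hs : s ⊆ Ioi c) (h : ∀ x ∈ s, μ (Ioc c x) = 0) :
    μ s = 0 := by
  refine measure_null_of_locally_null s fun x hx => ?_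
  by_cases hmax : ∃ y ∈ s, x < y
  · obtain ⟨y, hy, hxy⟩ := hmax
    exact ⟨Ioc c y, mem_nhdsWithin.2 ⟨Iio y, isOpen_Iio, hxy, fun z hz => ⟨hs hz.2, hz.1.le⟩⟩,
      h y hy⟩
  · push Not at hmax
    exact ⟨Ioc c x, mem_of_superset self_mem_nhdsWithin fun z hz => ⟨hs hz, hmax z hz⟩, h x hx⟩

theorem measure_setOf_lt_and_cdf_le_eq_zero (μ : Measure ℝ) [IsProbabilityMeasure μ] (c : ℝ) :
    μ {x | c < x ∧ cdf μ x ≤ cdf μ c} = 0 :=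
  measure_eq_zero_of_forall_measure_Ioc_eq_zero (fun _ hx => hx.1) fun x hx => by
    rw [← measure_cdf μ, StieltjesFunction.measure_Ioc, ENNReal.ofReal_eq_zero, sub_nonpos]
    exact hx.2

theorem preimage_Iic_ae_eq_cdf_map {Ω : Type*} [MeasurableSpace Ω] {P : Measure Ω}
    [IsProbabilityMeasure P] {X : Ω → ℝ} (hX : Measurable X) (c : ℝ) :
    X ⁻¹' Iic c =ᵐ[P] (cdf (P.map X) ∘ X) ⁻¹' Iic (cdf (P.map X) c) := by
  have : IsProbabilityMeasure (P.map X) := Measure.isProbabilityMeasure_map hX.aemeasurable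
  have hnull := measure_eq_zero_iff_ae_notMem.1 (measure_setOf_lt_and_cdf_le_eq_zero (P.map X) c)
  filter_upwards [ae_of_ae_map hX.aemeasurable hnull] with ω hω
  refine propext (?_ : X ω ≤ c ↔ cdf _ (X ω) ≤ cdf _ c)
  exact ⟨fun h => (cdf _).mono h, fun h => not_lt.1 fun hc => hω ⟨hc, h⟩⟩

section AeCompletion

variable {Ω : Type*}

abbrev aeCompletion {m0 : MeasurableSpace Ω} (m : MeasurableSpace Ω) (μ : Measure[m0] Ω) :
    MeasurableSpace Ω where
  MeasurableSet' s := ∃ t, MeasurableSet[m] t ∧ s =ᵐ[μ] t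
  measurableSet_empty := ⟨∅, MeasurableSet.empty, .rfl⟩
  measurableSet_compl _ := fun ⟨t, ht, hst⟩ => ⟨tᶜ, ht.compl, hst.compl⟩
  measurableSet_iUnion _ hs := by
    choose t ht hst using hs
    exact ⟨⋃ i, t i, .iUnion ht, Filter.EventuallyEq.countable_iUnion hst⟩

variable {E : Type*} [NormedAddCommGroup E] [NormedSpace ℝ E] [CompleteSpace E]
  {m₁ m₂ m0 : MeasurableSpace Ω} {μ : Measure Ω}

theorem condExp_ae_eq_of_le_aeCompletion (hm₂₁ : m₂ ≤ m₁) (hm₁ : m₁ ≤ m0)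
    [SigmaFinite (μ.trim (hm₂₁.trans hm₁))] (h : m₁ ≤ aeCompletion m₂ μ) (f : Ω → E) :
    μ[f|m₁] =ᵐ[μ] μ[f|m₂] := by
  by_cases hf : Integrable f μ
  swap
  · simp only [condExp_of_not_integrable hf, EventuallyEq.rfl]
  have := sigmaFiniteTrim_mono (μ := μ) hm₁ hm₂₁
  refine (ae_eq_condExp_of_forall_setIntegral_eq hm₁ hf
    (fun _ _ _ => integrable_condExp.integrableOn) (fun s hs _ => ?_)
    (stronglyMeasurable_condExp.mono hm₂₁).aestronglyMeasurable).symm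
  obtain ⟨t, ht, hst⟩ := h s hs
  calc ∫ ω in s, (μ[f|m₂]) ω ∂μ = ∫ ω in t, (μ[f|m₂]) ω ∂μ := setIntegral_congr_set hst
    _ = ∫ ω in t, f ω ∂μ := setIntegral_condExp (hm₂₁.trans hm₁) hf ht
    _ = ∫ ω in s, f ω ∂μ := setIntegral_congr_set hst.symm

end AeCompletion

theorem rank_transform_sufficiency_general
    {Ω : Type*} [MeasurableSpace Ω] (P : Measure Ω) [IsProbabilityMeasure P]
    (X W : Ω → ℝ) (hX : Measurable X)
    (F : ℝ → ℝ) (hF : ∀ x, F x = (P {ω | X ω ≤ x}).toReal) :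
    P[W|MeasurableSpace.comap X Real.measurableSpace]
      =ᵐ[P] P[W|MeasurableSpace.comap (F ∘ X) Real.measurableSpace] := by
  have := Measure.isProbabilityMeasure_map (μ := P) hX.aemeasurable
  obtain rfl : F = cdf (P.map X) := funext fun x => by
    rw [hF, cdf_eq_real, map_measureReal_apply hX measurableSet_Iic]
    rfl
  have hle : MeasurableSpace.comap (cdf (P.map X) ∘ X) Real.measurableSpace ≤
      MeasurableSpace.comap X Real.measurableSpace := by
    rw [← MeasurableSpace.comap_comp]
    exact MeasurableSpace.comap_mono (cdf _).mono.measurable.comap_le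
  refine condExp_ae_eq_of_le_aeCompletion hle hX.comap_le ?_ W
  exact Measurable.comap_le <| measurable_of_Iic fun c =>
    ⟨_, ⟨Iic _, measurableSet_Iic, rfl⟩, preimage_Iic_ae_eq_cdf_map hX c⟩

/-- Rank-transform sufficiency for regression: for any real random
variable `X` with distribution function `F_X` and any integrable real random
variable `W` on the same probability space,
`E[W | σ(X)] = E[W | σ(F_X ∘ X)]` almost surely. -/
theorem rank_transform_sufficiency
    {Ω : Type*} [MeasurableSpace Ω] (P : Measure Ω) [IsProbabilityMeasure P]
    (X W : Ω → ℝ) (hX : Measurable X) (hW : Integrable W P)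
    (F : ℝ → ℝ) (hF : ∀ x, F x = (P {ω | X ω ≤ x}).toReal) :
    P[W|MeasurableSpace.comap X Real.measurableSpace]
      =ᵐ[P] P[W|MeasurableSpace.comap (F ∘ X) Real.measurableSpace] :=
  rank_transform_sufficiency_general P X W hX F hF
end

section
/- Kruskal–Wallis statistic as a sum of squared first-order LP coefficients: let R_1,…,R_N be a permutation of {1,…,N} (the ranks of N pooled untied observations), partitioned into k groups with index sets G_1,…,G_k of sizes n_1,…,n_k. Define KW = (12/(N(N+1))) Σ_{ℓ=1}^k n_ℓ ((1/n_ℓ) Σ_{i∈G_ℓ} R_i − (N+1)/2)², and define the empirical first-order LP coefficient of group ℓ as LP₁|ℓ = (1/n_ℓ) Σ_{i∈G_ℓ} √(12/(N²−1)) (R_i − (N+1)/2). Then KW = ((N−1)/N) · Σ_{ℓ=1}^k n_ℓ (LP₁|ℓ)², and moreover Σ_{ℓ=1}^k n_ℓ (LP₁|ℓ)² = N · Σ_{ℓ=1}^k (n_ℓ/N)(LP₁|ℓ)², the latter sum being the variance of the group-conditional mean of the empirical first LP basis under the empirical measure. -/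
/-- Kruskal–Wallis statistic as a sum of squared first-order LP
coefficients. `R_1,…,R_N` is a permutation of `{1,…,N}` (ranks of `N` pooled
untied observations), partitioned into `k` nonempty groups `G_1,…,G_k` of sizes
`n_1,…,n_k`. With
`KW = (12/(N(N+1))) Σ_ℓ n_ℓ ((1/n_ℓ) Σ_{i∈G_ℓ} R_i − (N+1)/2)²` and
`LP₁|ℓ = (1/n_ℓ) Σ_{i∈G_ℓ} √(12/(N²−1)) (R_i − (N+1)/2)`, we have
`KW = ((N−1)/N) Σ_ℓ n_ℓ (LP₁|ℓ)²` and
`Σ_ℓ n_ℓ (LP₁|ℓ)² = N Σ_ℓ (n_ℓ/N) (LP₁|ℓ)²`. -/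
theorem kruskal_wallis_as_LP_coefficients
    (N k : ℕ) (hN : 2 ≤ N) (hk : 1 ≤ k)
    (R : Fin N → ℕ)
    (hRinj : Function.Injective R)
    (hRmem : ∀ i, R i ∈ Finset.Icc 1 N)
    (G : Fin k → Finset (Fin N))
    (hGne : ∀ ℓ, (G ℓ).Nonempty)
    (hGdisj : ∀ ℓ ℓ', ℓ ≠ ℓ' → Disjoint (G ℓ) (G ℓ'))
    (hGcover : ∀ i, ∃ ℓ, i ∈ G ℓ)
    (n : Fin k → ℕ) (hn : ∀ ℓ, n ℓ = (G ℓ).card)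
    (KW : ℝ) (LP1 : Fin k → ℝ)
    (hKW : KW = (12 / ((N : ℝ) * ((N : ℝ) + 1))) *
      ∑ ℓ, (n ℓ : ℝ) *
        ((1 / (n ℓ : ℝ)) * (∑ i ∈ G ℓ, (R i : ℝ)) - ((N : ℝ) + 1) / 2) ^ 2)
    (hLP1 : ∀ ℓ, LP1 ℓ = (1 / (n ℓ : ℝ)) *
      ∑ i ∈ G ℓ, Real.sqrt (12 / ((N : ℝ) ^ 2 - 1)) * ((R i : ℝ) - ((N : ℝ) + 1) / 2)) :
    KW = (((N : ℝ) - 1) / (N : ℝ)) * ∑ ℓ, (n ℓ : ℝ) * (LP1 ℓ) ^ 2 ∧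
    ∑ ℓ, (n ℓ : ℝ) * (LP1 ℓ) ^ 2
      = (N : ℝ) * ∑ ℓ, ((n ℓ : ℝ) / (N : ℝ)) * (LP1 ℓ) ^ 2 := by
  have hN2 : (2:ℝ) ≤ (N:ℝ) := by exact_mod_cast hN
  have hNpos : (0:ℝ) < (N:ℝ) := by linarith
  have hden : (0:ℝ) < (N:ℝ)^2 - 1 := by nlinarith
  have hc : (0:ℝ) ≤ 12 / ((N:ℝ)^2 - 1) := by positivity
  have hsq : Real.sqrt (12 / ((N:ℝ)^2 - 1)) ^ 2 = 12 / ((N:ℝ)^2 - 1) :=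
    Real.sq_sqrt hc
  have key : ∀ ℓ, (n ℓ : ℝ) * (LP1 ℓ) ^ 2
      = (n ℓ : ℝ) * (12 / ((N:ℝ)^2 - 1)) *
        ((1 / (n ℓ : ℝ)) * (∑ i ∈ G ℓ, (R i : ℝ)) - ((N:ℝ)+1)/2) ^ 2 := by
    intro ℓ
    have hnpos : (0:ℝ) < (n ℓ : ℝ) := by
      have : 0 < (G ℓ).card := Finset.card_pos.mpr (hGne ℓ)
      rw [hn]; exact_mod_cast this
    have hsum : ∑ i ∈ G ℓ, Real.sqrt (12 / ((N:ℝ)^2 - 1)) * ((R i : ℝ) - ((N:ℝ)+1)/2)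
        = Real.sqrt (12 / ((N:ℝ)^2 - 1)) *
          ((∑ i ∈ G ℓ, (R i : ℝ)) - (n ℓ : ℝ) * (((N:ℝ)+1)/2)) := by
      rw [← Finset.mul_sum, Finset.sum_sub_distrib, Finset.sum_const, nsmul_eq_mul, hn]
    have hne : (n ℓ : ℝ) ≠ 0 := ne_of_gt hnpos
    rw [hLP1, hsum]
    have e : (1 / (n ℓ:ℝ)) * (Real.sqrt (12 / ((N:ℝ)^2 - 1)) *
        ((∑ i ∈ G ℓ, (R i : ℝ)) - (n ℓ : ℝ) * (((N:ℝ)+1)/2)))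
        = Real.sqrt (12 / ((N:ℝ)^2 - 1)) *
          ((1 / (n ℓ:ℝ)) * ((∑ i ∈ G ℓ, (R i : ℝ)) - (n ℓ : ℝ) * (((N:ℝ)+1)/2))) := by
      ring
    rw [e, mul_pow, hsq]
    have hS : (1 / (n ℓ:ℝ)) * ((∑ i ∈ G ℓ, (R i : ℝ)) - (n ℓ : ℝ) * (((N:ℝ)+1)/2))
        = (1 / (n ℓ : ℝ)) * (∑ i ∈ G ℓ, (R i : ℝ)) - ((N:ℝ)+1)/2 := by
      field_simp
    rw [hS]; ring
  constructor
  · rw [hKW, Finset.mul_sum, Finset.mul_sum]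
    refine Finset.sum_congr rfl fun ℓ _ => ?_
    rw [key ℓ]
    have h1 : (N:ℝ)*((N:ℝ)+1) ≠ 0 := by positivity
    have h2 : (N:ℝ)^2 - 1 ≠ 0 := ne_of_gt hden
    field_simp
    ring
  · rw [Finset.mul_sum]
    refine Finset.sum_congr rfl fun ℓ _ => ?_
    field_simp
end

section
/- Mood statistic as a sum of squared second-order LP coefficients: let R_1,…,R_N be a permutation of {1,…,N}, partitioned into k groups with index sets G_1,…,G_k of sizes n_1,…,n_k. Define MOOD = (180/(N(N+1)(N²−4))) Σ_{ℓ=1}^k n_ℓ ((1/n_ℓ) Σ_{i∈G_ℓ} (R_i − (N+1)/2)² − (N²−1)/12)², and define the empirical second-order LP coefficient of group ℓ as LP₂|ℓ = (1/n_ℓ) Σ_{i∈G_ℓ} T₂(R_i), where T₂(r) = √(180/((N²−1)(N²−4))) ((r − (N+1)/2)² − (N²−1)/12). Then MOOD = ((N−1)/N) · Σ_{ℓ=1}^k n_ℓ (LP₂|ℓ)². -/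
/-!
`T₂` is an affine function of the squared centred rank with slope `√(180/((N²−1)(N²−4)))`,
so `n_ℓ (LP₂|ℓ)²` is `180/((N²−1)(N²−4))` times the `ℓ`-th summand of MOOD; the factor
`(N−1)/N` turns this constant into `180/(N(N+1)(N²−4))` because `N² − 1 = (N−1)(N+1)`.
-/

open Finset

/-- Also true for `s = ∅`, where both sides vanish because `1 / 0 = 0`. -/
theorem card_mul_sq_mean_mul_sub {ι : Type*} (s : Finset ι) (f : ι → ℝ) (c m : ℝ) :
    (#s : ℝ) * ((1 / #s) * ∑ i ∈ s, c * (f i - m)) ^ 2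
      = c ^ 2 * ((#s : ℝ) * ((1 / #s) * ∑ i ∈ s, f i - m) ^ 2) := by
  rcases s.eq_empty_or_nonempty with rfl | hs
  · simp
  have hcard : (#s : ℝ) ≠ 0 := by exact_mod_cast hs.card_pos.ne'
  rw [← mul_sum, sum_sub_distrib, sum_const, nsmul_eq_mul]
  field_simp

theorem sub_one_div_mul_div_sq_sub_one_mul (x a b : ℝ) (hx : x ≠ 1) :
    (x - 1) / x * (a / ((x ^ 2 - 1) * b)) = a / (x * (x + 1) * b) := by
  have hx' : x - 1 ≠ 0 := sub_ne_zero.mpr hx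
  calc (x - 1) / x * (a / ((x ^ 2 - 1) * b))
      = ((x - 1) * a) / ((x - 1) * (x * (x + 1) * b)) := by rw [div_mul_div_comm]; ring_nf
    _ = a / (x * (x + 1) * b) := mul_div_mul_left _ _ hx'

theorem mood_statistic_as_LP_coefficients_general
    (N k : ℕ) (hN : 3 ≤ N)
    (R : Fin N → ℕ)
    (G : Fin k → Finset (Fin N))
    (n : Fin k → ℕ) (hn : ∀ ℓ, n ℓ = (G ℓ).card)
    (T₂ : ℕ → ℝ)
    (hT₂ : ∀ r : ℕ, T₂ r = Real.sqrt (180 / (((N : ℝ) ^ 2 - 1) * ((N : ℝ) ^ 2 - 4))) *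
      (((r : ℝ) - ((N : ℝ) + 1) / 2) ^ 2 - ((N : ℝ) ^ 2 - 1) / 12))
    (MOOD : ℝ) (LP2 : Fin k → ℝ)
    (hMOOD : MOOD = (180 / ((N : ℝ) * ((N : ℝ) + 1) * ((N : ℝ) ^ 2 - 4))) *
      ∑ ℓ, (n ℓ : ℝ) *
        ((1 / (n ℓ : ℝ)) * (∑ i ∈ G ℓ, ((R i : ℝ) - ((N : ℝ) + 1) / 2) ^ 2)
          - ((N : ℝ) ^ 2 - 1) / 12) ^ 2)
    (hLP2 : ∀ ℓ, LP2 ℓ = (1 / (n ℓ : ℝ)) * ∑ i ∈ G ℓ, T₂ (R i)) :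
    MOOD = (((N : ℝ) - 1) / (N : ℝ)) * ∑ ℓ, (n ℓ : ℝ) * (LP2 ℓ) ^ 2 := by
  have hN' : (3 : ℝ) ≤ N := by exact_mod_cast hN
  have hc : Real.sqrt (180 / (((N : ℝ) ^ 2 - 1) * ((N : ℝ) ^ 2 - 4))) ^ 2
      = 180 / (((N : ℝ) ^ 2 - 1) * ((N : ℝ) ^ 2 - 4)) :=
    Real.sq_sqrt (div_nonneg (by norm_num) (mul_nonneg (by nlinarith) (by nlinarith)))
  have hterm : ∀ ℓ, (n ℓ : ℝ) * LP2 ℓ ^ 2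
      = Real.sqrt (180 / (((N : ℝ) ^ 2 - 1) * ((N : ℝ) ^ 2 - 4))) ^ 2 * ((n ℓ : ℝ) *
        ((1 / (n ℓ : ℝ)) * (∑ i ∈ G ℓ, ((R i : ℝ) - ((N : ℝ) + 1) / 2) ^ 2)
          - ((N : ℝ) ^ 2 - 1) / 12) ^ 2) := by
    intro ℓ
    simp only [hLP2, hT₂, hn]
    exact card_mul_sq_mean_mul_sub _ _ _ _
  rw [hMOOD, sum_congr rfl fun ℓ _ => hterm ℓ, ← mul_sum, ← mul_assoc, hc,
    sub_one_div_mul_div_sq_sub_one_mul _ _ _ (by linarith)]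

/-- Mood statistic as a sum of squared second-order LP
coefficients. `R_1,…,R_N` is a permutation of `{1,…,N}`, partitioned into `k`
nonempty groups `G_1,…,G_k` of sizes `n_1,…,n_k`. With
`MOOD = (180/(N(N+1)(N²−4))) Σ_ℓ n_ℓ ((1/n_ℓ) Σ_{i∈G_ℓ} (R_i −(N+1)/2)² −(N²−1)/12)²`
and `LP₂|ℓ = (1/n_ℓ) Σ_{i∈G_ℓ} T₂(R_i)` where
`T₂(r) = √(180/((N²−1)(N²−4))) ((r −(N+1)/2)² −(N²−1)/12)`, we have
`MOOD = ((N−1)/N) Σ_ℓ n_ℓ (LP₂|ℓ)²`. -/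
theorem mood_statistic_as_LP_coefficients
    (N k : ℕ) (hN : 3 ≤ N) (hk : 1 ≤ k)
    (R : Fin N → ℕ)
    (hRinj : Function.Injective R)
    (hRmem : ∀ i, R i ∈ Finset.Icc 1 N)
    (G : Fin k → Finset (Fin N))
    (hGne : ∀ ℓ, (G ℓ).Nonempty)
    (hGdisj : ∀ ℓ ℓ', ℓ ≠ ℓ' → Disjoint (G ℓ) (G ℓ'))
    (hGcover : ∀ i, ∃ ℓ, i ∈ G ℓ)
    (n : Fin k → ℕ) (hn : ∀ ℓ, n ℓ = (G ℓ).card)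
    (T₂ : ℕ → ℝ)
    (hT₂ : ∀ r : ℕ, T₂ r = Real.sqrt (180 / (((N : ℝ) ^ 2 - 1) * ((N : ℝ) ^ 2 - 4))) *
      (((r : ℝ) - ((N : ℝ) + 1) / 2) ^ 2 - ((N : ℝ) ^ 2 - 1) / 12))
    (MOOD : ℝ) (LP2 : Fin k → ℝ)
    (hMOOD : MOOD = (180 / ((N : ℝ) * ((N : ℝ) + 1) * ((N : ℝ) ^ 2 - 4))) *
      ∑ ℓ, (n ℓ : ℝ) *
        ((1 / (n ℓ : ℝ)) * (∑ i ∈ G ℓ, ((R i : ℝ) - ((N : ℝ) + 1) / 2) ^ 2)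
          - ((N : ℝ) ^ 2 - 1) / 12) ^ 2)
    (hLP2 : ∀ ℓ, LP2 ℓ = (1 / (n ℓ : ℝ)) * ∑ i ∈ G ℓ, T₂ (R i)) :
    MOOD = (((N : ℝ) - 1) / (N : ℝ)) * ∑ ℓ, (n ℓ : ℝ) * (LP2 ℓ) ^ 2 :=
  mood_statistic_as_LP_coefficients_general N k hN R G n hn T₂ hT₂ MOOD LP2 hMOOD hLP2
end

section
/- Mean and variance of the mid-distribution transform: let Z be a discrete real random variable taking countably many values z with probability mass function p_Z(z) = P(Z = z) and distribution function F_Z, and let F^mid_Z(z) = F_Z(z) − (1/2) p_Z(z) be its mid-distribution function. Then E[F^mid_Z(Z)] = 1/2 and Var[F^mid_Z(Z)] = (1/12)(1 − Σ_z p_Z(z)³). -/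
/-!
Write `A z = ∑_{t < z} p t`, so that `F = A + p` and `Fmid = A + p / 2`. For independent copies
`X, Y, W` of `Z`, the quantities `p z (F z + A z)` and `p z (F z² + F z A z + A z²)` are the
probabilities that `max (X, Y)`, resp. `max (X, Y, W)`, equals `z` (discrete analogues of
`d(u²)` and `d(u³)` for the uniform distribution), so both sum to `1`. The mean and the second
moment of `Fmid(Z)` are linear combinations of these two sums, of `∑ p = 1` and of `∑ p³`.
-/

open scoped ENNReal

namespace MidDistribution

variable {α : Type*} [LinearOrder α]

-- In `ℝ≥0∞` every rearrangement of the sums below is valid without summability hypotheses.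
noncomputable def cdf (P : α → ℝ≥0∞) (z : α) : ℝ≥0∞ := ∑' t : Set.Iic z, P t

noncomputable def cdfLT (P : α → ℝ≥0∞) (z : α) : ℝ≥0∞ := ∑' t : Set.Iio z, P t

/-- For independent `X ~ P` and `Y ~ Q`, the events `X ≤ Y` and `Y < X` are complementary. -/
theorem tsum_mul_cdf_add_mul_cdfLT (P Q : α → ℝ≥0∞) :
    ∑' z, (Q z * cdf P z + P z * cdfLT Q z) = (∑' z, P z) * ∑' z, Q z := by
  have hswap : ∑' z, P z * cdfLT Q z = ∑' z, Q z * ∑' t, (Set.Iic z)ᶜ.indicator P t := by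
    simp only [cdfLT, tsum_subtype, ← ENNReal.tsum_mul_left]
    rw [ENNReal.tsum_comm]
    refine tsum_congr fun z => tsum_congr fun t => ?_
    by_cases h : z < t <;> simp [Set.indicator, h, mul_comm]
  calc ∑' z, (Q z * cdf P z + P z * cdfLT Q z)
      = ∑' z, Q z * ∑' t, ((Set.Iic z).indicator P t + (Set.Iic z)ᶜ.indicator P t) := by
        simp only [ENNReal.tsum_add, hswap, mul_add, cdf, tsum_subtype]
    _ = (∑' z, P z) * ∑' z, Q z := by
        simp only [Set.indicator_self_add_compl_apply, ENNReal.tsum_mul_right, mul_comm]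

theorem tsum_mul_cdf_add_cdfLT (P : α → ℝ≥0∞) :
    ∑' z, P z * (cdf P z + cdfLT P z) = (∑' z, P z) ^ 2 := by
  simpa only [mul_add, mul_comm, sq] using tsum_mul_cdf_add_mul_cdfLT P P

/-- `t ↦ P t * (cdf P t + cdfLT P t)` is the mass function of the maximum of two independent
draws from `P`, whose strict distribution function is `cdfLT P ^ 2`. -/
theorem cdfLT_mul_cdf_add_cdfLT (P : α → ℝ≥0∞) (z : α) :
    cdfLT (fun t => P t * (cdf P t + cdfLT P t)) z = cdfLT P z ^ 2 := by
  set P' := (Set.Iio z).indicator P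
  have hP' : ∀ t < z, P' t = P t := fun t ht => Set.indicator_of_mem (s := Set.Iio z) ht P
  have hcdf : ∀ t < z, cdf P' t = cdf P t := fun t ht =>
    tsum_congr fun s => hP' s (s.2.trans_lt ht)
  have hcdfLT : ∀ t < z, cdfLT P' t = cdfLT P t := fun t ht =>
    tsum_congr fun s => hP' s (s.2.trans ht)
  calc cdfLT (fun t => P t * (cdf P t + cdfLT P t)) z
      = ∑' t : Set.Iio z, P' t * (cdf P' t + cdfLT P' t) := tsum_congr fun t => by
        rw [hP' t t.2, hcdf t t.2, hcdfLT t t.2]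
    _ = ∑' t, P' t * (cdf P' t + cdfLT P' t) :=
        tsum_subtype_eq_of_support_subset (f := fun t => P' t * (cdf P' t + cdfLT P' t))
          ((Function.support_mul_subset_left _ _).trans Set.support_indicator_subset)
    _ = cdfLT P z ^ 2 := by rw [tsum_mul_cdf_add_cdfLT, cdfLT, tsum_subtype]

theorem tsum_mul_cdf_sq_add_cdf_mul_cdfLT_add_cdfLT_sq (P : α → ℝ≥0∞) :
    ∑' z, P z * (cdf P z ^ 2 + cdf P z * cdfLT P z + cdfLT P z ^ 2) = (∑' z, P z) ^ 3 := by
  have h := tsum_mul_cdf_add_mul_cdfLT P fun t => P t * (cdf P t + cdfLT P t)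
  simp only [cdfLT_mul_cdf_add_cdfLT, tsum_mul_cdf_add_cdfLT] at h
  rw [pow_succ', ← h]
  exact tsum_congr fun z => by ring

section Real

variable {p : α → ℝ}

theorem tsum_Iic_eq_tsum_Iio_add (hp : Summable p) (z : α) :
    ∑' t : Set.Iic z, p t = ∑' t : Set.Iio z, p t + p z := by
  rw [← Set.Iio_union_right, (hp.subtype _).tsum_union_disjoint (by simp) (hp.subtype _),
    tsum_singleton]

theorem hasSum_toReal_of_tsum_eq_ofReal {ι : Type*} {f : ι → ℝ≥0∞} {c : ℝ}
    (hc : 0 ≤ c) (h : ∑' i, f i = ENNReal.ofReal c) : HasSum (fun i => (f i).toReal) c := by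
  have hne : ∑' i, f i ≠ ∞ := h ▸ ENNReal.ofReal_ne_top
  convert ENNReal.hasSum_toReal hne
  rw [← ENNReal.tsum_toReal_eq (ENNReal.ne_top_of_tsum_ne_top hne), h, ENNReal.toReal_ofReal hc]

theorem cdf_ofReal (hp0 : ∀ z, 0 ≤ p z) (hp : Summable p) (z : α) :
    cdf (fun t => ENNReal.ofReal (p t)) z = ENNReal.ofReal (∑' t : Set.Iic z, p t) :=
  (ENNReal.ofReal_tsum_of_nonneg (f := fun t : Set.Iic z => p t) (fun t => hp0 t)
    (hp.subtype _)).symm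

theorem cdfLT_ofReal (hp0 : ∀ z, 0 ≤ p z) (hp : Summable p) (z : α) :
    cdfLT (fun t => ENNReal.ofReal (p t)) z = ENNReal.ofReal (∑' t : Set.Iio z, p t) :=
  (ENNReal.ofReal_tsum_of_nonneg (f := fun t : Set.Iio z => p t) (fun t => hp0 t)
    (hp.subtype _)).symm

theorem hasSum_mul_tsum_Iic_add_tsum_Iio (hp0 : ∀ z, 0 ≤ p z) {s : ℝ} (hp : HasSum p s) :
    HasSum (fun z => p z * (∑' t : Set.Iic z, p t + ∑' t : Set.Iio z, p t)) (s ^ 2) := by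
  convert hasSum_toReal_of_tsum_eq_ofReal (sq_nonneg s)
    (by rw [tsum_mul_cdf_add_cdfLT fun t => ENNReal.ofReal (p t),
      ← ENNReal.ofReal_tsum_of_nonneg hp0 hp.summable, hp.tsum_eq,
      ENNReal.ofReal_pow (hp.nonneg hp0)]) with z
  simp [cdf_ofReal hp0 hp.summable, cdfLT_ofReal hp0 hp.summable, ENNReal.toReal_add, hp0,
    tsum_nonneg]

theorem hasSum_mul_tsum_Iic_sq_add (hp0 : ∀ z, 0 ≤ p z) {s : ℝ} (hp : HasSum p s) :
    HasSum (fun z => p z * ((∑' t : Set.Iic z, p t) ^ 2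
      + (∑' t : Set.Iic z, p t) * (∑' t : Set.Iio z, p t) + (∑' t : Set.Iio z, p t) ^ 2))
      (s ^ 3) := by
  convert hasSum_toReal_of_tsum_eq_ofReal (pow_nonneg (hp.nonneg hp0) 3)
    (by rw [tsum_mul_cdf_sq_add_cdf_mul_cdfLT_add_cdfLT_sq fun t => ENNReal.ofReal (p t),
      ← ENNReal.ofReal_tsum_of_nonneg hp0 hp.summable, hp.tsum_eq,
      ENNReal.ofReal_pow (hp.nonneg hp0)]) with z
  simp [cdf_ofReal hp0 hp.summable, cdfLT_ofReal hp0 hp.summable, ENNReal.toReal_add, hp0,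
    tsum_nonneg, ENNReal.mul_eq_top]

end Real

end MidDistribution

theorem mid_distribution_mean_and_variance_general
    (p F Fmid : ℝ → ℝ)
    (hp0 : ∀ z, 0 ≤ p z)
    (hpsummable : Summable p)
    (hpsum : ∑' z, p z = 1)
    (hF : ∀ z, F z = ∑' t : {t : ℝ // t ≤ z}, p t)
    (hFmid : ∀ z, Fmid z = F z - p z / 2) :
    (∑' z, p z * Fmid z = 1 / 2) ∧
    (∑' z, p z * (Fmid z - 1 / 2) ^ 2 = (1 / 12) * (1 - ∑' z, (p z) ^ 3)) := by
  have hp : HasSum p 1 := hpsum ▸ hpsummable.hasSum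
  have hIic : ∀ z, ∑' t : Set.Iic z, p t = F z := fun z => (hF z).symm
  have hIio : ∀ z, ∑' t : Set.Iio z, p t = F z - p z := fun z => by
    rw [← hIic, MidDistribution.tsum_Iic_eq_tsum_Iio_add hpsummable, add_sub_cancel_right]
  have h2 := MidDistribution.hasSum_mul_tsum_Iic_add_tsum_Iio hp0 hp
  have h3 := MidDistribution.hasSum_mul_tsum_Iic_sq_add hp0 hp
  simp only [hIic, hIio] at h2 h3
  have hp3 : Summable fun z => p z ^ 3 :=
    hpsummable.of_nonneg_of_le (fun z => pow_nonneg (hp0 z) 3) fun z =>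
      pow_le_of_le_one (hp0 z) (le_hasSum hp z fun t _ => hp0 t) (by norm_num)
  have hvar := (((h3.mul_left (1 / 3)).sub (hp3.hasSum.mul_left (1 / 12))).sub
    (h2.mul_left (1 / 2))).add (hp.mul_left (1 / 4))
  constructor
  · convert (h2.mul_left (1 / 2)).tsum_eq using 1
    · exact tsum_congr fun z => by rw [hFmid]; ring
    · norm_num
  · convert hvar.tsum_eq using 1
    · exact tsum_congr fun z => by rw [hFmid]; ring
    · ring

/-- Mean and variance of the mid-distribution transform: let `Z`
be a discrete real random variable with countable support, probability mass
function `p` and distribution function `F(z) = P(Z ≤ z) = Σ_{t ≤ z} p(t)`, and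
let `Fmid(z) = F(z) − p(z)/2` be its mid-distribution function. Then
`E[Fmid(Z)] = 1/2` and `Var[Fmid(Z)] = (1/12)(1 − Σ_z p(z)³)`. -/
theorem mid_distribution_mean_and_variance
    (p F Fmid : ℝ → ℝ)
    (hp0 : ∀ z, 0 ≤ p z)
    (hsupp : {z : ℝ | p z ≠ 0}.Countable)
    (hpsummable : Summable p)
    (hpsum : ∑' z, p z = 1)
    (hF : ∀ z, F z = ∑' t : {t : ℝ // t ≤ z}, p t)
    (hFmid : ∀ z, Fmid z = F z - p z / 2) :
    (∑' z, p z * Fmid z = 1 / 2) ∧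
    (∑' z, p z * (Fmid z - 1 / 2) ^ 2 = (1 / 12) * (1 - ∑' z, (p z) ^ 3)) :=
  mid_distribution_mean_and_variance_general p F Fmid hp0 hpsummable hpsum hF hFmid
end
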